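/- The group presented by ⟨u_1, u_2, u_3, u_4 | u_i^2 = (u_i u_j)^3 = e for all i ≠ j, (u_1 u_2 u_3 u_2)^2 = (u_1 u_3 u_4 u_3)^2 = (u_2 u_3 u_4 u_3)^2 = e⟩ is isomorphic to Sym_5, of order 120. -/

import Mathlib

/-! The generators map to the star transpositions `(0 i+1)`, which satisfy all relators and
generate `Sym₅`; so it suffices to show that the group has at most `5! = 120` elements. The
relators force `u k` to commute with `u i u j u i` for distinct `i, j < k` (in `Sym₅` these
are the disjoint transpositions `(0 k+1)` and `(i+1 j+1)`). Using this, the set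
`{1, u k} ∪ {u i u k | i < k}` is mapped into itself by left multiplication with `u 0, …, u k`
up to right factors in `⟨u 0, …, u (k-1)⟩`, so it meets every left coset of that subgroup in
`⟨u 0, …, u k⟩`. The indices of the chain `1 ≤ ⟨u 0⟩ ≤ ⟨u 0, u 1⟩ ≤ ⋯` are thus at most
`2, 3, 4, 5`. -/

namespace Stmt15

/-- The relators of the group `⟨u₁,u₂,u₃,u₄ ∣ uᵢ² = (uᵢuⱼ)³ = e (i ≠ j),
(u₁u₂u₃u₂)² = (u₁u₃u₄u₃)² = (u₂u₃u₄u₃)² = e⟩`. -/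
def rels : Set (FreeGroup (Fin 4)) :=
  let u := fun i : Fin 4 => FreeGroup.of i
  {x | ∃ i, x = u i ^ 2} ∪
  {x | ∃ i j, i ≠ j ∧ x = (u i * u j) ^ 3} ∪
  {(u 0 * (u 1 * u 2 * u 1)) ^ 2, (u 0 * (u 2 * u 3 * u 2)) ^ 2,
    (u 1 * (u 2 * u 3 * u 2)) ^ 2}

open Equiv Finset MulAction Pointwise
open scoped Nat

section Involutions

variable {G : Type*} [Group G] {x y : G}

theorem inv_eq_self_of_sq_eq_one (hx : x ^ 2 = 1) : x⁻¹ = x :=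
  inv_eq_of_mul_eq_one_right (by rwa [← sq])

theorem braid_of_mul_pow_three_eq_one (hx : x ^ 2 = 1) (hy : y ^ 2 = 1)
    (h : (x * y) ^ 3 = 1) : x * y * x = y * x * y :=
  calc x * y * x = (y * x * y)⁻¹ := eq_inv_of_mul_eq_one_left <| by
        rw [← h]; simp only [pow_succ, pow_zero, one_mul, mul_assoc]
    _ = y * x * y := by
      simp only [mul_inv_rev, inv_eq_self_of_sq_eq_one hx, inv_eq_self_of_sq_eq_one hy, mul_assoc]

theorem commute_of_mul_pow_two_eq_one (hx : x ^ 2 = 1) (hy : y ^ 2 = 1)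
    (h : (x * y) ^ 2 = 1) : Commute x y :=
  calc x * y = (x * y)⁻¹ := eq_inv_of_mul_eq_one_left (by rwa [← sq])
    _ = y * x := by rw [mul_inv_rev, inv_eq_self_of_sq_eq_one hx, inv_eq_self_of_sq_eq_one hy]

theorem conj_sq_eq_one (hx : x ^ 2 = 1) (hy : y ^ 2 = 1) : (y * x * y) ^ 2 = 1 := by
  nth_rw 2 [← inv_eq_self_of_sq_eq_one hy]
  rw [conj_pow, hx, mul_one, mul_inv_cancel]

theorem commute_conj_of_commute_conj {z : G} (hy : y ^ 2 = 1) (hxy : y * x * y = x * y * x)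
    (h : Commute x (y * z * y)) : Commute z (x * y * x) := by
  have := (Commute.conj_iff y).mpr h
  rw [inv_eq_self_of_sq_eq_one hy] at this
  rw [← hxy]
  simpa [mul_assoc, ← mul_assoc y y, ← sq, hy] using this.symm

theorem conj_mul_conj_mul_conj_eq {z : G} (hx : x ^ 2 = 1) (hz : z ^ 2 = 1)
    (hyz : y * z * y = z * y * z) (h : Commute x (y * z * y)) :
    x * z * x * (y * z * y) * (x * z * x) = x * y * x :=
  calc x * z * x * (y * z * y) * (x * z * x) = x * z * (x * (y * z * y) * x) * z * x := by
        simp only [mul_assoc]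
    _ = x * (z * (z * y * z) * z) * x := by
        rw [h.eq, mul_assoc (y * z * y), ← sq, hx, mul_one, hyz]
        simp only [mul_assoc]
    _ = x * y * x := by simp [mul_assoc, ← mul_assoc z z, ← sq, hz]

theorem mem_stabilizer_of_sq_eq_one {α : Type*} [MulAction G α] {s : Set α} (hx : x ^ 2 = 1)
    (hs : x • s ⊆ s) : x ∈ stabilizer G s := by
  refine mem_stabilizer_iff.mpr (hs.antisymm ?_)
  calc s = x • x • s := by rw [smul_smul, ← sq, hx, one_smul]
    _ ⊆ x • s := Set.smul_set_mono hs

end Involutions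

section StarTranspositions

variable {G : Type*} [Group G]

/-- The relations satisfied by the star transpositions `u i = (0 i+1)`, `i < n`, of
`Sym (n + 1)`: there `u i * u j * u i` is the transposition `(i+1 j+1)`, which commutes with
`u k` for `k ∉ {i, j}`. -/
structure StarTranspositionRelations (u : ℕ → G) (n : ℕ) : Prop where
  sq_eq_one : ∀ i < n, u i ^ 2 = 1
  braid : ∀ i j, i < j → j < n → u i * u j * u i = u j * u i * u j
  commute : ∀ i j k, i < j → j < k → k < n → Commute (u k) (u i * u j * u i)

/-- Left coset representatives of `⟨u 0, …, u (k-1)⟩` in `⟨u 0, …, u k⟩`; for the star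
transpositions they send `k+1` to `k+1`, `0` and `i+1` respectively. -/
def cosetReps [DecidableEq G] (u : ℕ → G) (k : ℕ) : Finset G :=
  insert 1 (insert (u k) ((range k).image fun i => u i * u k))

def normalForms [DecidableEq G] (u : ℕ → G) : ℕ → Finset G
  | 0 => {1}
  | k + 1 => cosetReps u k * normalForms u k

section Counting

variable [DecidableEq G] (u : ℕ → G)

theorem card_cosetReps_le (k : ℕ) : #(cosetReps u k) ≤ k + 2 :=
  calc #(cosetReps u k) ≤ #((range k).image fun i => u i * u k) + 2 :=
        (card_insert_le _ _).trans (by simpa using card_insert_le _ _)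
    _ ≤ k + 2 := by grw [card_image_le, card_range]

theorem card_normalForms_le : ∀ k, #(normalForms u k) ≤ (k + 1)!
  | 0 => by simp [normalForms]
  | k + 1 => calc #(normalForms u (k + 1)) ≤ #(cosetReps u k) * #(normalForms u k) := card_mul_le
      _ ≤ (k + 2) * (k + 1)! := Nat.mul_le_mul (card_cosetReps_le u k) (card_normalForms_le k)
      _ = (k + 2)! := (Nat.factorial_succ _).symm

theorem one_mem_cosetReps (k : ℕ) : (1 : G) ∈ cosetReps u k :=
  mem_insert_self _ _

theorem one_mem_normalForms : ∀ k, (1 : G) ∈ normalForms u k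
  | 0 => mem_singleton_self 1
  | k + 1 => by
    simpa only [normalForms, mul_one] using
      mul_mem_mul (one_mem_cosetReps u k) (one_mem_normalForms k)

end Counting

namespace StarTranspositionRelations

variable {u : ℕ → G} {n : ℕ} (h : StarTranspositionRelations u n)
include h

theorem braid_of_ne {i j : ℕ} (hi : i < n) (hj : j < n) (hij : i ≠ j) :
    u i * u j * u i = u j * u i * u j := by
  rcases hij.lt_or_gt with hlt | hlt
  · exact h.braid i j hlt hj
  · exact (h.braid j i hlt hi).symm

theorem commute_of_ne {i j k : ℕ} (hik : i < k) (hjk : j < k) (hk : k < n) (hij : i ≠ j) :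
    Commute (u k) (u i * u j * u i) := by
  rcases hij.lt_or_gt with hlt | hlt
  · exact h.commute i j k hlt hjk hk
  · rw [h.braid_of_ne (hik.trans hk) (hjk.trans hk) hij]
    exact h.commute j i k hlt hik hk

theorem mul_mem_cosetReps_mul_closure [DecidableEq G] {j k : ℕ} (hjk : j ≤ k) (hk : k < n)
    {t : G} (ht : t ∈ cosetReps u k) :
    u j * t ∈ (cosetReps u k : Set G) * Subgroup.closure (u '' Set.Iio k) := by
  have hsq : ∀ i ≤ k, u i * u i = 1 := fun i hi => by rw [← pow_two, h.sq_eq_one i (by omega)]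
  have hgen : ∀ i < k, u i ∈ Subgroup.closure (u '' Set.Iio k) :=
    fun i hi => Subgroup.subset_closure ⟨i, hi, rfl⟩
  have hrep : ∀ i < k, u i * u k ∈ cosetReps u k :=
    fun i hi => mem_insert_of_mem (mem_insert_of_mem (mem_image_of_mem _ (mem_range.mpr hi)))
  have hone : (1 : G) ∈ cosetReps u k := one_mem_cosetReps u k
  have huk : u k ∈ cosetReps u k := mem_insert_of_mem (mem_insert_self _ _)
  simp only [cosetReps, mem_insert, mem_image, mem_range] at ht
  rcases hjk.lt_or_eq with hjk | rfl
  · rcases ht with rfl | rfl | ⟨i, hik, rfl⟩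
    · simpa using Set.mul_mem_mul hone (hgen j hjk)
    · simpa using Set.mul_mem_mul (hrep j hjk) (Subgroup.one_mem _)
    obtain rfl | hij := eq_or_ne i j
    · rw [← mul_assoc, hsq i hjk.le, one_mul]
      simpa using Set.mul_mem_mul huk (Subgroup.one_mem _)
    · have hconj : u i * u j * u i ∈ Subgroup.closure (u '' Set.Iio k) :=
        mul_mem (mul_mem (hgen i hik) (hgen j hjk)) (hgen i hik)
      convert Set.mul_mem_mul (hrep i hik) hconj using 1
      calc u j * (u i * u k) = u i * (u i * u j * u i) * u k := by
            simp only [← mul_assoc, hsq i hik.le, one_mul]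
        _ = u i * u k * (u i * u j * u i) := by
            rw [mul_assoc, ← (h.commute_of_ne hik hjk hk hij).eq, ← mul_assoc]
  · rcases ht with rfl | rfl | ⟨i, hik, rfl⟩
    · simpa using Set.mul_mem_mul huk (Subgroup.one_mem _)
    · simpa [hsq j le_rfl] using Set.mul_mem_mul hone (Subgroup.one_mem _)
    · convert Set.mul_mem_mul (hrep i hik) (hgen i hik) using 1
      rw [← mul_assoc, ← h.braid_of_ne (hik.trans hk) hk hik.ne, mul_assoc]

theorem closure_le_stabilizer_normalForms [DecidableEq G] :
    ∀ k ≤ n, Subgroup.closure (u '' Set.Iio k) ≤ stabilizer G (normalForms u k : Set G)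
  | 0, _ => by simp
  | k + 1, hk => by
    have ih := closure_le_stabilizer_normalForms k (by omega)
    rw [Subgroup.closure_le]
    rintro _ ⟨j, hj, rfl⟩
    have hjk : j ≤ k := Nat.lt_succ_iff.mp hj
    refine mem_stabilizer_of_sq_eq_one (h.sq_eq_one j (hjk.trans_lt hk)) ?_
    calc u j • (normalForms u (k + 1) : Set G)
        = u j • (cosetReps u k : Set G) * normalForms u k := by
          rw [normalForms, coe_mul, smul_mul_assoc]
      _ ⊆ (cosetReps u k : Set G) * Subgroup.closure (u '' Set.Iio k) * normalForms u k :=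
          Set.mul_subset_mul_right <| Set.smul_set_subset_iff.mpr fun _ ht =>
            h.mul_mem_cosetReps_mul_closure hjk hk ht
      _ ⊆ (cosetReps u k : Set G) * normalForms u k := by
          rw [mul_assoc]
          exact Set.mul_subset_mul_left ((Set.mul_subset_mul_right ih).trans
            (stabilizer_mul_self _).le)
      _ = normalForms u (k + 1) := by rw [normalForms, coe_mul]

theorem finite_and_card_le (hgen : Subgroup.closure (u '' Set.Iio n) = ⊤) :
    Finite G ∧ Nat.card G ≤ (n + 1)! := by
  classical
  have huniv : (normalForms u n : Set G) = Set.univ := by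
    refine Set.eq_univ_of_forall fun g => ?_
    have hg : g ∈ stabilizer G (normalForms u n : Set G) :=
      h.closure_le_stabilizer_normalForms n le_rfl (hgen ▸ Subgroup.mem_top g)
    rw [← mem_stabilizer_iff.mp hg]
    simpa using Set.smul_mem_smul_set (a := g) (one_mem_normalForms u n)
  refine ⟨Set.finite_univ_iff.mp (huniv ▸ (normalForms u n).finite_toSet), ?_⟩
  calc Nat.card G = (Set.univ : Set G).ncard := (Set.ncard_univ G).symm
    _ = #(normalForms u n) := by rw [← huniv, Set.ncard_coe_finset]
    _ ≤ (n + 1)! := card_normalForms_le u n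

end StarTranspositionRelations

end StarTranspositions

theorem closure_range_swap_zero_succ (n : ℕ) :
    Subgroup.closure (Set.range fun i : Fin n => swap (0 : Fin (n + 1)) i.succ) = ⊤ := by
  have hzero : ∀ x : Fin (n + 1), swap 0 x ∈
      Subgroup.closure (Set.range fun i : Fin n => swap (0 : Fin (n + 1)) i.succ) :=
    Fin.cases (by rw [swap_self]; exact Subgroup.one_mem _) fun i =>
      Subgroup.subset_closure ⟨i, rfl⟩
  rw [eq_top_iff, ← Perm.closure_isSwap, Subgroup.closure_le]
  rintro _ ⟨x, y, -, rfl⟩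
  exact SubmonoidClass.swap_mem_trans _ (swap_comm 0 x ▸ hzero x) (hzero y)

local notation "Γ" => PresentedGroup rels

theorem of_sq (i : Fin 4) : (PresentedGroup.of i : Γ) ^ 2 = 1 :=
  PresentedGroup.one_of_mem (Or.inl (Or.inl ⟨i, rfl⟩))

theorem of_mul_of_pow_three {i j : Fin 4} (hij : i ≠ j) :
    (PresentedGroup.of i * PresentedGroup.of j : Γ) ^ 3 = 1 :=
  PresentedGroup.one_of_mem (Or.inl (Or.inr ⟨i, j, hij, rfl⟩))

theorem of_braid {i j : Fin 4} (hij : i ≠ j) :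
    (PresentedGroup.of i * PresentedGroup.of j * PresentedGroup.of i : Γ) =
      PresentedGroup.of j * PresentedGroup.of i * PresentedGroup.of j :=
  braid_of_mul_pow_three_eq_one (of_sq i) (of_sq j) (of_mul_of_pow_three hij)

theorem commute_of_mem_rels {i j k : Fin 4}
    (h : (FreeGroup.of i * (FreeGroup.of j * FreeGroup.of k * FreeGroup.of j)) ^ 2 ∈ rels) :
    Commute (PresentedGroup.of i : Γ)
      (PresentedGroup.of j * PresentedGroup.of k * PresentedGroup.of j) :=
  commute_of_mul_pow_two_eq_one (of_sq i) (conj_sq_eq_one (of_sq k) (of_sq j))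
    (PresentedGroup.one_of_mem h)

-- Only the values at `i < 4` matter: `Fin.ofNat` reduces `i` modulo 4.
def gen (i : ℕ) : Γ := PresentedGroup.of (Fin.ofNat 4 i)

theorem starTranspositionRelations_gen : StarTranspositionRelations gen 4 where
  sq_eq_one i _ := of_sq _
  braid i j hij hj := of_braid fun e => by
    have := congrArg Fin.val e
    simp only [Fin.val_ofNat, Nat.mod_eq_of_lt (hij.trans hj), Nat.mod_eq_of_lt hj] at this
    omega
  commute i j k hij hjk hk := by
    have hr012 := commute_of_mem_rels (i := 0) (j := 1) (k := 2) (Or.inr (Or.inl rfl))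
    have hr023 := commute_of_mem_rels (i := 0) (j := 2) (k := 3) (Or.inr (Or.inr (Or.inl rfl)))
    have hr123 := commute_of_mem_rels (i := 1) (j := 2) (k := 3) (Or.inr (Or.inr (Or.inr rfl)))
    have hc012 := commute_conj_of_commute_conj (of_sq 1) (of_braid (by decide)) hr012
    have hc023 := commute_conj_of_commute_conj (of_sq 2) (of_braid (by decide)) hr023
    have hc123 := commute_conj_of_commute_conj (of_sq 2) (of_braid (by decide)) hr123
    interval_cases k <;> interval_cases j <;> interval_cases i
    · exact hc012
    -- `(0, 1, 3)` is not a relator: `u₀u₁u₀ = (u₀u₂u₀)(u₁u₂u₁)(u₀u₂u₀)`, whose factors commute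
    -- with `u₃`.
    · show Commute _ (PresentedGroup.of 0 * PresentedGroup.of 1 * PresentedGroup.of 0)
      rw [← conj_mul_conj_mul_conj_eq (of_sq 0) (of_sq 2) (of_braid (by decide)) hr012]
      exact (hc023.mul_right hc123).mul_right hc023
    · exact hc023
    · exact hc123

theorem closure_image_gen : Subgroup.closure (gen '' Set.Iio 4) = ⊤ := by
  rw [← PresentedGroup.closure_range_of]
  congr 1
  ext g
  constructor
  · rintro ⟨i, -, rfl⟩
    exact ⟨_, rfl⟩
  · rintro ⟨i, rfl⟩
    exact ⟨i, i.isLt, congrArg _ (Fin.ofNat_val_eq_self i)⟩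

def starTransposition (i : Fin 4) : Perm (Fin 5) := swap 0 i.succ

theorem lift_starTransposition_eq_one : ∀ r ∈ rels, FreeGroup.lift starTransposition r = 1 := by
  rintro r ((⟨i, rfl⟩ | ⟨i, j, hij, rfl⟩) | rfl | rfl | rfl) <;>
    simp only [map_pow, map_mul, FreeGroup.lift_apply_of]
  · revert i; decide
  · revert i j; decide
  all_goals decide

def toSym5 : Γ →* Perm (Fin 5) := PresentedGroup.toGroup lift_starTransposition_eq_one

theorem toSym5_surjective : Function.Surjective toSym5 := by
  rw [← MonoidHom.range_eq_top, eq_top_iff, ← closure_range_swap_zero_succ 4,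
    Subgroup.closure_le]
  rintro _ ⟨i, rfl⟩
  exact ⟨PresentedGroup.of i, PresentedGroup.toGroup.of _⟩

theorem presentedGroup_iso_sym5 :
    Nonempty (PresentedGroup rels ≃* Equiv.Perm (Fin 5)) := by
  obtain ⟨hfin, hcard⟩ := starTranspositionRelations_gen.finite_and_card_le closure_image_gen
  refine ⟨MulEquiv.ofBijective toSym5 (toSym5_surjective.bijective_of_nat_card_le ?_)⟩
  rwa [Nat.card_perm, Nat.card_fin]

end Stmt15
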